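/- If a pentagonal geometry PENT(3,r) with exactly two opposite line pairs exists, then the number of lines entirely within the 2(r-4) points outside the opposite line pairs, namely (2r² - 32r + 132)/3, is at least 2r - 8; equivalently (2r-19)² ≥ 49, so r ∉ {7,9,10,12}. -/

import Mathlib

open scoped Classical

/-- A pentagonal geometry PENT(k,r). -/
structure PentGeom (V : Type) [Fintype V] [DecidableEq V] (k r : ℕ) : Type where
  lines : Finset (Finset V)
  size_pos : 2 ≤ k
  rep_pos : 1 ≤ r
  pairwise : ∀ x y : V, x ≠ y → (lines.filter (fun l => x ∈ l ∧ y ∈ l)).card ≤ 1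
  uniform : ∀ l ∈ lines, l.card = k
  regular : ∀ x : V, (lines.filter (fun l => x ∈ l)).card = r
  opp : ∀ x : V,
    (Finset.univ.filter (fun y => y ≠ x ∧ ∀ l ∈ lines, ¬(x ∈ l ∧ y ∈ l))) ∈ lines

variable {V : Type} [Fintype V] [DecidableEq V] {k r : ℕ}

/-- The opposite line of a point. -/
def PentGeom.oppLine (P : PentGeom V k r) (x : V) : Finset V :=
  Finset.univ.filter (fun y => y ≠ x ∧ ∀ l ∈ P.lines, ¬(x ∈ l ∧ y ∈ l))

/-- Two points are collinear if some line contains both. -/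
def PentGeom.Collinear (P : PentGeom V k r) (x y : V) : Prop :=
  x ≠ y ∧ ∃ l ∈ P.lines, x ∈ l ∧ y ∈ l

/-- An opposite line pair. -/
def PentGeom.OppPair (P : PentGeom V k r) (l m : Finset V) : Prop :=
  l ∈ P.lines ∧ m ∈ P.lines ∧ l ≠ m ∧
    (∀ x ∈ l, P.oppLine x = m) ∧ (∀ y ∈ m, P.oppLine y = l)

/-!
Let `A` and `B` be the six points on the first and on the second opposite line pair, and
`S = A ∪ B`. A line meeting `A` twice is one of the two lines of its pair, so counting incidences
with `A` gives `6r - 4` lines meeting `A`, and likewise for `B`. Opposite lines of points of `A`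
stay inside `A`, so every point of `A` is collinear with every point of `B`, and the lines meeting
both are in bijection with `A × B`. As there are `v = 2r + 4` points and `b = vr/3` lines,
inclusion-exclusion leaves `b - (12r - 44) = (2r² - 32r + 132)/3` lines inside `C = V \ S`.

For the lower bound, `x ↦ oppLine x` maps `C` injectively to these lines: if two points had the
same opposite line `m`, the line through them would form a third opposite line pair with `m`.
-/

open Finset

theorem Finset.sum_card_inter_mul_card_inter {α : Type*} [DecidableEq α] (L : Finset (Finset α))
    (A B : Finset α) :
    ∑ t ∈ L, #(A ∩ t) * #(B ∩ t) = ∑ x ∈ A, ∑ y ∈ B, #{t ∈ L | x ∈ t ∧ y ∈ t} := by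
  have hpairs : ∀ t ∈ L, #(A ∩ t) * #(B ∩ t) = #{p ∈ A ×ˢ B | p.1 ∈ t ∧ p.2 ∈ t} := by
    intro t _
    rw [filter_product (fun x => x ∈ t) (fun y => y ∈ t), card_product, filter_mem_eq_inter,
      filter_mem_eq_inter]
  rw [sum_congr rfl hpairs, ← sum_product' (f := fun x y => #{t ∈ L | x ∈ t ∧ y ∈ t})]
  simpa [bipartiteAbove, bipartiteBelow] using
    (sum_card_bipartiteAbove_eq_sum_card_bipartiteBelow (fun p t => p.1 ∈ t ∧ p.2 ∈ t)
      (s := A ×ˢ B) (t := L)).symm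

theorem Finset.subset_union_of_pair_eq {α : Type*} [DecidableEq α] {l m l' m' : Finset α}
    (he : ({l, m} : Finset (Finset α)) = {l', m'}) : l ⊆ l' ∪ m' := by
  have hmem : l ∈ ({l', m'} : Finset (Finset α)) := he ▸ mem_insert_self l {m}
  rcases mem_insert.1 hmem with rfl | hmem
  · exact subset_union_left
  · exact mem_singleton.1 hmem ▸ subset_union_right

namespace PentGeom

section

variable (P : PentGeom V k r)

theorem mem_oppLine {x y : V} : y ∈ P.oppLine x ↔ y ≠ x ∧ ∀ l ∈ P.lines, ¬(x ∈ l ∧ y ∈ l) := by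
  simp [oppLine]

theorem oppLine_mem_lines (x : V) : P.oppLine x ∈ P.lines := P.opp x

theorem self_notMem_oppLine (x : V) : x ∉ P.oppLine x := by
  simp [mem_oppLine]

theorem mem_oppLine_comm {x y : V} : y ∈ P.oppLine x ↔ x ∈ P.oppLine y := by
  simp only [mem_oppLine, ne_comm, and_comm]

theorem notMem_of_mem_oppLine {x y : V} (h : y ∈ P.oppLine x) {t : Finset V}
    (ht : t ∈ P.lines) (hx : x ∈ t) : y ∉ t :=
  fun hy => ((P.mem_oppLine).1 h).2 t ht ⟨hx, hy⟩

theorem eq_of_mem_of_mem {x y : V} (hxy : x ≠ y) {t t' : Finset V} (ht : t ∈ P.lines)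
    (ht' : t' ∈ P.lines) (hx : x ∈ t) (hy : y ∈ t) (hx' : x ∈ t') (hy' : y ∈ t') : t = t' :=
  Finset.card_le_one.1 (P.pairwise x y hxy) t (by simp [ht, hx, hy]) t' (by simp [ht', hx', hy'])

theorem exists_line_of_notMem_oppLine {x y : V} (hxy : y ≠ x) (h : y ∉ P.oppLine x) :
    ∃ t ∈ P.lines, x ∈ t ∧ y ∈ t := by
  simpa [mem_oppLine, hxy] using h

theorem card_lines_mem_mem {x y : V} (hxy : y ≠ x) (h : y ∉ P.oppLine x) :
    #{t ∈ P.lines | x ∈ t ∧ y ∈ t} = 1 := by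
  obtain ⟨t, ht, hx, hy⟩ := P.exists_line_of_notMem_oppLine hxy h
  exact le_antisymm (P.pairwise x y hxy.symm) (card_pos.2 ⟨t, by simp [ht, hx, hy]⟩)

theorem card_lines_mul : #P.lines * k = Fintype.card V * r := by
  rw [← Finset.sum_card fun x => P.regular x, sum_congr rfl P.uniform, sum_const, smul_eq_mul]

theorem card_points_add_rep [Nonempty V] (P : PentGeom V k r) :
    Fintype.card V + r = k * r + k + 1 := by
  obtain ⟨x⟩ := ‹Nonempty V›
  have hpoint : ∀ y, #{t ∈ P.lines | x ∈ t ∧ y ∈ t}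
      + (if y ∈ insert x (P.oppLine x) then 1 else 0) = 1 + if y = x then r else 0 := by
    intro y
    by_cases hyx : y = x
    · simp [hyx, P.regular, add_comm]
    by_cases hy : y ∈ P.oppLine x
    · have : #{t ∈ P.lines | x ∈ t ∧ y ∈ t} = 0 := by
        simpa using fun t ht hx => P.notMem_of_mem_oppLine hy ht hx
      simp [hyx, hy, this]
    · simp [hyx, hy, P.card_lines_mem_mem hyx hy]
  have hdouble : ∑ y, #{t ∈ P.lines | x ∈ t ∧ y ∈ t} = k * r := by
    calc ∑ y, #{t ∈ P.lines | x ∈ t ∧ y ∈ t}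
        = ∑ t ∈ {t ∈ P.lines | x ∈ t}, #{y ∈ univ | y ∈ t} := by
          simpa [bipartiteAbove, bipartiteBelow, filter_filter] using
            sum_card_bipartiteAbove_eq_sum_card_bipartiteBelow (fun y t => y ∈ t)
              (s := univ) (t := {t ∈ P.lines | x ∈ t})
      _ = ∑ t ∈ {t ∈ P.lines | x ∈ t}, k := by
          refine sum_congr rfl fun t ht => ?_
          simp [P.uniform t (mem_filter.1 ht).1]
      _ = k * r := by rw [sum_const, P.regular, smul_eq_mul, mul_comm]
  have := Finset.sum_congr rfl fun y (_ : y ∈ univ) => hpoint y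
  rw [sum_add_distrib, sum_add_distrib, hdouble, sum_ite_mem, univ_inter, sum_const,
    card_insert_of_notMem (P.self_notMem_oppLine x), P.uniform _ (P.oppLine_mem_lines x),
    sum_const, card_univ, sum_ite_eq', if_pos (mem_univ x), smul_eq_mul, smul_eq_mul] at this
  linarith

end

variable {P : PentGeom V k r} {l m l' m' : Finset V}

theorem OppPair.symm (h : P.OppPair l m) : P.OppPair m l :=
  ⟨h.2.1, h.1, h.2.2.1.symm, h.2.2.2.2, h.2.2.2.1⟩

theorem OppPair.disjoint (h : P.OppPair l m) : Disjoint l m :=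
  disjoint_left.2 fun x hxl hxm => P.self_notMem_oppLine x (h.2.2.2.1 x hxl ▸ hxm)

theorem OppPair.card_union (h : P.OppPair l m) : #(l ∪ m) = 2 * k := by
  rw [card_union_of_disjoint h.disjoint, P.uniform l h.1, P.uniform m h.2.1, two_mul]

theorem OppPair.oppLine_subset (h : P.OppPair l m) {x : V} (hx : x ∈ l ∪ m) :
    P.oppLine x ⊆ l ∪ m := by
  rcases mem_union.1 hx with hx | hx
  · exact (h.2.2.2.1 x hx).symm ▸ subset_union_right
  · exact (h.2.2.2.2 x hx).symm ▸ subset_union_left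

theorem OppPair.disjoint_oppLine (h : P.OppPair l m) {x : V} (hx : x ∉ l ∪ m) :
    Disjoint (P.oppLine x) (l ∪ m) :=
  disjoint_left.2 fun _ hy hyS =>
    hx (h.oppLine_subset hyS (P.mem_oppLine_comm.1 hy))

theorem OppPair.oppLine_subset_compl (h : P.OppPair l m) (h' : P.OppPair l' m') {x : V}
    (hx : x ∈ univ \ (l ∪ m ∪ (l' ∪ m'))) : P.oppLine x ⊆ univ \ (l ∪ m ∪ (l' ∪ m')) := by
  rw [mem_sdiff, mem_union, not_or] at hx
  exact subset_sdiff.2 ⟨subset_univ _,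
    disjoint_union_right.2 ⟨h.disjoint_oppLine hx.2.1, h'.disjoint_oppLine hx.2.2⟩⟩

theorem OppPair.eq_or_eq_of_one_lt_card_inter (h : P.OppPair l m) {t : Finset V}
    (ht : t ∈ P.lines) (h2 : 1 < #((l ∪ m) ∩ t)) : t = l ∨ t = m := by
  obtain ⟨p, hp, q, hq, hpq⟩ := one_lt_card.1 h2
  rw [mem_inter, mem_union] at hp hq
  rcases hp with ⟨hp | hp, hpt⟩ <;> rcases hq with ⟨hq | hq, hqt⟩
  · exact Or.inl (P.eq_of_mem_of_mem hpq ht h.1 hpt hqt hp hq)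
  · exact absurd hqt (P.notMem_of_mem_oppLine (h.2.2.2.1 p hp ▸ hq) ht hpt)
  · exact absurd hqt (P.notMem_of_mem_oppLine (h.2.2.2.2 p hp ▸ hq) ht hpt)
  · exact Or.inr (P.eq_of_mem_of_mem hpq ht h.2.1 hpt hqt hp hq)

theorem nonempty_of_mem_lines {t : Finset V} (ht : t ∈ P.lines) : t.Nonempty := by
  rw [← card_pos, P.uniform t ht]
  exact zero_lt_two.trans_le P.size_pos

theorem OppPair.pair_eq_of_mem (h : P.OppPair l m) (h' : P.OppPair l' m') {x : V} (hx : x ∈ l)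
    (hx' : x ∈ l') : ({l, m} : Finset (Finset V)) = {l', m'} := by
  have hm : m = m' := (h.2.2.2.1 x hx).symm.trans (h'.2.2.2.1 x hx')
  obtain ⟨y, hy⟩ := nonempty_of_mem_lines h.2.1
  have hl : l = l' := (h.2.2.2.2 y hy).symm.trans (h'.2.2.2.2 y (hm ▸ hy))
  rw [hl, hm]

theorem OppPair.disjoint_union (h : P.OppPair l m) (h' : P.OppPair l' m')
    (hne : ({l, m} : Finset (Finset V)) ≠ {l', m'}) : Disjoint (l ∪ m) (l' ∪ m') := by
  refine disjoint_left.2 fun x hx hx' => hne ?_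
  rcases mem_union.1 hx with hx | hx <;> rcases mem_union.1 hx' with hx' | hx'
  · exact h.pair_eq_of_mem h' hx hx'
  · rw [pair_comm l' m']; exact h.pair_eq_of_mem h'.symm hx hx'
  · rw [pair_comm l m]; exact h.symm.pair_eq_of_mem h' hx hx'
  · rw [pair_comm l m, pair_comm l' m']; exact h.symm.pair_eq_of_mem h'.symm hx hx'

theorem oppPair_of_oppLine_eq {x y : V} (hxy : x ≠ y) (heq : P.oppLine x = P.oppLine y) :
    ∃ l, x ∈ l ∧ P.OppPair l (P.oppLine x) := by
  obtain ⟨l, hl, hxl, hyl⟩ :=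
    P.exists_line_of_notMem_oppLine hxy.symm (heq ▸ P.self_notMem_oppLine y)
  have hopp : ∀ z ∈ P.oppLine x, P.oppLine z = l := fun z hz =>
    P.eq_of_mem_of_mem hxy (P.oppLine_mem_lines z) hl (P.mem_oppLine_comm.1 hz)
      (P.mem_oppLine_comm.1 (heq ▸ hz)) hxl hyl
  refine ⟨l, hxl, hl, P.oppLine_mem_lines x, fun h => P.self_notMem_oppLine x (h ▸ hxl),
    fun p hp => ?_, hopp⟩
  refine (eq_of_subset_of_card_le (fun z hz => ?_) ?_).symm
  · exact P.mem_oppLine_comm.1 (hopp z hz ▸ hp)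
  · rw [P.uniform _ (P.oppLine_mem_lines p), P.uniform _ (P.oppLine_mem_lines x)]

theorem OppPair.card_lines_inter_nonempty (h : P.OppPair l m) :
    #{t ∈ P.lines | ((l ∪ m) ∩ t).Nonempty} + 2 * k = 2 * k * r + 2 := by
  have hk := P.size_pos
  have hline : ∀ t ∈ P.lines, #((l ∪ m) ∩ t) = (if ((l ∪ m) ∩ t).Nonempty then 1 else 0)
      + (if t = l then k - 1 else 0) + (if t = m then k - 1 else 0) := by
    intro t ht
    by_cases htl : t = l
    · subst htl
      rw [inter_eq_right.2 subset_union_left, if_pos (P.nonempty_of_mem_lines ht), if_pos rfl,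
        if_neg h.2.2.1, P.uniform t ht]
      omega
    by_cases htm : t = m
    · subst htm
      rw [inter_eq_right.2 subset_union_right, if_pos (P.nonempty_of_mem_lines ht), if_neg htl,
        if_pos rfl, P.uniform t ht]
      omega
    have hle : #((l ∪ m) ∩ t) ≤ 1 :=
      not_lt.1 fun h2 => (h.eq_or_eq_of_one_lt_card_inter ht h2).elim htl htm
    simp only [htl, htm, if_false, add_zero, ← card_pos]
    split_ifs <;> omega
  have hsum := sum_card_inter (B := P.lines) (s := l ∪ m) fun x _ => P.regular x
  rw [sum_congr rfl hline, sum_add_distrib, sum_add_distrib, sum_boole, Nat.cast_id,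
    sum_ite_eq', sum_ite_eq', if_pos h.1, if_pos h.2.1, h.card_union] at hsum
  omega

theorem OppPair.inter_eq_empty_of_one_lt_card_inter (h : P.OppPair l m) {S t : Finset V}
    (hS : Disjoint (l ∪ m) S) (ht : t ∈ P.lines) (h2 : 1 < #((l ∪ m) ∩ t)) : S ∩ t = ∅ := by
  have htlm : t ⊆ l ∪ m := by
    rcases h.eq_or_eq_of_one_lt_card_inter ht h2 with rfl | rfl
    exacts [subset_union_left, subset_union_right]
  exact disjoint_iff_inter_eq_empty.1 (hS.symm.mono_right htlm)

theorem OppPair.card_lines_inter_nonempty_inter_nonempty (h : P.OppPair l m)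
    (h' : P.OppPair l' m') (hd : Disjoint (l ∪ m) (l' ∪ m')) :
    #{t ∈ P.lines | ((l ∪ m) ∩ t).Nonempty ∧ ((l' ∪ m') ∩ t).Nonempty} = 2 * k * (2 * k) := by
  have hline : ∀ t ∈ P.lines, #((l ∪ m) ∩ t) * #((l' ∪ m') ∩ t)
      = if ((l ∪ m) ∩ t).Nonempty ∧ ((l' ∪ m') ∩ t).Nonempty then 1 else 0 := by
    intro t ht
    by_cases h2 : 1 < #((l ∪ m) ∩ t)
    · simp [h.inter_eq_empty_of_one_lt_card_inter hd ht h2]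
    by_cases h2' : 1 < #((l' ∪ m') ∩ t)
    · simp [h'.inter_eq_empty_of_one_lt_card_inter hd.symm ht h2']
    simp only [← card_pos]
    split_ifs with hc
    · rw [show #((l ∪ m) ∩ t) = 1 by omega, show #((l' ∪ m') ∩ t) = 1 by omega]
    · rcases not_and_or.1 hc with hc | hc <;> simp [Nat.eq_zero_of_not_pos hc]
  have hpair : ∀ x ∈ l ∪ m, ∀ y ∈ l' ∪ m', #{t ∈ P.lines | x ∈ t ∧ y ∈ t} = 1 := by
    intro x hx y hy
    refine P.card_lines_mem_mem (fun hyx => disjoint_left.1 hd hx (hyx ▸ hy)) fun hyo => ?_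
    exact disjoint_left.1 hd (h.oppLine_subset hx hyo) hy
  have hsum := sum_card_inter_mul_card_inter P.lines (l ∪ m) (l' ∪ m')
  rw [sum_congr rfl hline, sum_boole, sum_congr rfl fun x hx => sum_congr rfl (hpair x hx)]
    at hsum
  simpa [h.card_union, h'.card_union] using hsum

theorem OppPair.card_lines_inter_union_nonempty (h : P.OppPair l m) (h' : P.OppPair l' m')
    (hd : Disjoint (l ∪ m) (l' ∪ m')) :
    #{t ∈ P.lines | ((l ∪ m ∪ (l' ∪ m')) ∩ t).Nonempty} + 4 * k ^ 2 + 4 * k = 4 * k * r + 4 := by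
  have hunion := card_union_add_card_inter {t ∈ P.lines | ((l ∪ m) ∩ t).Nonempty}
    {t ∈ P.lines | ((l' ∪ m') ∩ t).Nonempty}
  rw [← filter_or, ← filter_and, h.card_lines_inter_nonempty_inter_nonempty h' hd] at hunion
  simp only [union_inter_distrib_right (l ∪ m), union_nonempty]
  have := h.card_lines_inter_nonempty
  have := h'.card_lines_inter_nonempty
  linarith

theorem card_le_card_lines_subset (P : PentGeom V k r) {U : Finset V}
    (hU : ∀ x ∈ U, P.oppLine x ⊆ U) (hpairs : ∀ l m, P.OppPair l m → Disjoint l U) :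
    #U ≤ #{t ∈ P.lines | t ⊆ U} := by
  refine card_le_card_of_injOn P.oppLine
    (fun x hx => mem_filter.2 ⟨P.oppLine_mem_lines x, hU x hx⟩) fun x hx y _ heq => ?_
  by_contra hxy
  obtain ⟨l, hxl, hl⟩ := P.oppPair_of_oppLine_eq hxy heq
  exact disjoint_left.1 (hpairs _ _ hl) hxl hx

theorem three_mul_card_lines_subset_compl [Nonempty V] (P : PentGeom V 3 r) {l m l' m' : Finset V}
    (h : P.OppPair l m) (h' : P.OppPair l' m') (hd : Disjoint (l ∪ m) (l' ∪ m')) :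
    3 * #{t ∈ P.lines | t ⊆ univ \ (l ∪ m ∪ (l' ∪ m'))} + 32 * r = 2 * r ^ 2 + 132 := by
  have hsplit := card_filter_add_card_filter_not
    (s := P.lines) fun t => ((l ∪ m ∪ (l' ∪ m')) ∩ t).Nonempty
  have hcompl : ∀ t : Finset V, t ⊆ univ \ (l ∪ m ∪ (l' ∪ m')) ↔
      ¬((l ∪ m ∪ (l' ∪ m')) ∩ t).Nonempty := by
    intro t
    rw [subset_sdiff, not_nonempty_iff_eq_empty, ← disjoint_iff_inter_eq_empty, disjoint_comm]
    simp
  simp only [← hcompl] at hsplit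
  have := h.card_lines_inter_union_nonempty h' hd
  have := P.card_lines_mul
  have := P.card_points_add_rep
  nlinarith

end PentGeom

/-- if a PENT(3,r) with exactly two opposite line pairs exists, then the
number of lines entirely inside the 2(r-4) points of type C, namely (2r²-32r+132)/3, is at
least 2r-8; equivalently (2r-19)² ≥ 49, so r ∉ {7,9,10,12}. -/
theorem stmt11 (r : ℕ) (V : Type) [Fintype V] [DecidableEq V] (P : PentGeom V 3 r)
    (l₁ m₁ l₂ m₂ : Finset V) (h₁ : P.OppPair l₁ m₁) (h₂ : P.OppPair l₂ m₂)
    (hdist : ({l₁, m₁} : Finset (Finset V)) ≠ {l₂, m₂})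
    (honlytwo : ∀ l m : Finset V, P.OppPair l m →
      ({l, m} : Finset (Finset V)) = {l₁, m₁} ∨ ({l, m} : Finset (Finset V)) = {l₂, m₂}) :
    ∀ C : Finset V, C = Finset.univ \ (l₁ ∪ m₁ ∪ l₂ ∪ m₂) →
      (2 * r ≤ (P.lines.filter (fun t => t ⊆ C)).card + 8 ∧
        3 * (P.lines.filter (fun t => t ⊆ C)).card + 32 * r = 2 * r ^ 2 + 132) ∧
      (49 : ℤ) ≤ (2 * (r : ℤ) - 19) ^ 2 ∧
      r ∉ ({7, 9, 10, 12} : Set ℕ) := by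
  rintro C rfl
  rw [union_assoc (l₁ ∪ m₁)]
  have : Nonempty V := (P.nonempty_of_mem_lines h₁.1).to_type
  have hd := h₁.disjoint_union h₂ hdist
  have hcount := P.three_mul_card_lines_subset_compl h₁ h₂ hd
  have hbound := P.card_le_card_lines_subset (fun x hx => h₁.oppLine_subset_compl h₂ hx)
    fun l m hlm => disjoint_sdiff.mono_left <| by
      rcases honlytwo l m hlm with he | he
      · exact (subset_union_of_pair_eq he).trans subset_union_left
      · exact (subset_union_of_pair_eq he).trans subset_union_right
  have hcard : #(univ \ (l₁ ∪ m₁ ∪ (l₂ ∪ m₂))) + 12 = 2 * r + 4 := by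
    have := card_sdiff_add_card_eq_card (subset_univ (l₁ ∪ m₁ ∪ (l₂ ∪ m₂)))
    rw [card_union_of_disjoint hd, h₁.card_union, h₂.card_union, card_univ] at this
    have := P.card_points_add_rep
    omega
  have hsq : (49 : ℤ) ≤ (2 * (r : ℤ) - 19) ^ 2 := by
    push_cast [← Nat.cast_le (α := ℤ)] at hcount hbound hcard
    nlinarith
  refine ⟨⟨by omega, hcount⟩, hsq, ?_⟩
  rintro (rfl | rfl | rfl | rfl) <;> norm_num at hsq
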